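/- Up to isomorphism, the only four-element unbounded distributive bilattice is FOUR, the bilattice on {00, 01, 10, 11} in which the t-order is the lattice with bottom 00, top 11 and incomparable middle elements 01, 10, the k-order is the lattice with bottom 01, top 10 and incomparable middle elements 00, 11, and ¬ swaps 00 and 11 while fixing 01 and 10. -/

import Mathlib

/-!
A finite distributive pre-bilattice has bounds `f, t` for the truth order and `n, b` for the
knowledge order, and interlacing forces `n ∨ₜ b = t`, `n ∧ₜ b = f`, `f ∨ₖ t = b`, `f ∧ₖ t = n`.
Negation swaps `f` and `t` and fixes `n` and `b`, so once `f ≠ t` and `n ≠ b` the four bounds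
are pairwise distinct. With four elements they exhaust the carrier, and the identities above
determine all operation tables, which are those of FOUR.
-/

/-- An unbounded distributive pre-bilattice: two lattice structures
`(∨_t, ∧_t)` and `(∨_k, ∧_k)` on the same carrier, with each of the four
operations distributing over each of the other three. -/
structure DPBU (A : Type*) where
  tsup : A → A → A
  tinf : A → A → A
  ksup : A → A → A
  kinf : A → A → A
  tsup_comm : ∀ a b, tsup a b = tsup b a
  tinf_comm : ∀ a b, tinf a b = tinf b a
  tsup_assoc : ∀ a b c, tsup (tsup a b) c = tsup a (tsup b c)
  tinf_assoc : ∀ a b c, tinf (tinf a b) c = tinf a (tinf b c)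
  tsup_absorb : ∀ a b, tsup a (tinf a b) = a
  tinf_absorb : ∀ a b, tinf a (tsup a b) = a
  ksup_comm : ∀ a b, ksup a b = ksup b a
  kinf_comm : ∀ a b, kinf a b = kinf b a
  ksup_assoc : ∀ a b c, ksup (ksup a b) c = ksup a (ksup b c)
  kinf_assoc : ∀ a b c, kinf (kinf a b) c = kinf a (kinf b c)
  ksup_absorb : ∀ a b, ksup a (kinf a b) = a
  kinf_absorb : ∀ a b, kinf a (ksup a b) = a
  tsup_tinf : ∀ a b c, tsup a (tinf b c) = tinf (tsup a b) (tsup a c)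
  tsup_ksup : ∀ a b c, tsup a (ksup b c) = ksup (tsup a b) (tsup a c)
  tsup_kinf : ∀ a b c, tsup a (kinf b c) = kinf (tsup a b) (tsup a c)
  tinf_tsup : ∀ a b c, tinf a (tsup b c) = tsup (tinf a b) (tinf a c)
  tinf_ksup : ∀ a b c, tinf a (ksup b c) = ksup (tinf a b) (tinf a c)
  tinf_kinf : ∀ a b c, tinf a (kinf b c) = kinf (tinf a b) (tinf a c)
  ksup_tsup : ∀ a b c, ksup a (tsup b c) = tsup (ksup a b) (ksup a c)
  ksup_tinf : ∀ a b c, ksup a (tinf b c) = tinf (ksup a b) (ksup a c)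
  ksup_kinf : ∀ a b c, ksup a (kinf b c) = kinf (ksup a b) (ksup a c)
  kinf_tsup : ∀ a b c, kinf a (tsup b c) = tsup (kinf a b) (kinf a c)
  kinf_tinf : ∀ a b c, kinf a (tinf b c) = tinf (kinf a b) (kinf a c)
  kinf_ksup : ∀ a b c, kinf a (ksup b c) = ksup (kinf a b) (kinf a c)

/-- The truth order `≤_t`. -/
def DPBU.tle {A : Type*} (B : DPBU A) (a b : A) : Prop := B.tsup a b = b

/-- The knowledge order `≤_k`. -/
def DPBU.kle {A : Type*} (B : DPBU A) (a b : A) : Prop := B.ksup a b = b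

/-- An unbounded distributive bilattice: an unbounded distributive
pre-bilattice with an involutory negation which is a dual endomorphism of
the t-lattice and an endomorphism of the k-lattice. -/
structure DBU (A : Type*) extends DPBU A where
  neg : A → A
  neg_neg : ∀ a, neg (neg a) = a
  neg_tsup : ∀ a b, neg (tsup a b) = tinf (neg a) (neg b)
  neg_tinf : ∀ a b, neg (tinf a b) = tsup (neg a) (neg b)
  neg_ksup : ∀ a b, neg (ksup a b) = ksup (neg a) (neg b)
  neg_kinf : ∀ a b, neg (kinf a b) = kinf (neg a) (neg b)

/-- The four-element unbounded distributive bilattice `4u` (FOUR without the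
nullary constants), on `Bool × Bool` with `00 = (false,false)` etc. -/
def fourDBU : DBU (Bool × Bool) where
  tsup p q := (p.1 || q.1, p.2 || q.2)
  tinf p q := (p.1 && q.1, p.2 && q.2)
  ksup p q := (p.1 || q.1, p.2 && q.2)
  kinf p q := (p.1 && q.1, p.2 || q.2)
  neg p := (!p.2, !p.1)
  tsup_comm := by decide
  tinf_comm := by decide
  tsup_assoc := by decide
  tinf_assoc := by decide
  tsup_absorb := by decide
  tinf_absorb := by decide
  ksup_comm := by decide
  kinf_comm := by decide
  ksup_assoc := by decide
  kinf_assoc := by decide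
  ksup_absorb := by decide
  kinf_absorb := by decide
  tsup_tinf := by decide
  tsup_ksup := by decide
  tsup_kinf := by decide
  tinf_tsup := by decide
  tinf_ksup := by decide
  tinf_kinf := by decide
  ksup_tsup := by decide
  ksup_tinf := by decide
  ksup_kinf := by decide
  kinf_tsup := by decide
  kinf_tinf := by decide
  kinf_ksup := by decide
  neg_neg := by decide
  neg_tsup := by decide
  neg_tinf := by decide
  neg_ksup := by decide
  neg_kinf := by decide

section LatticeOps

variable {A : Type*} {sup inf : A → A → A}

theorem sup_self_of_absorb (sup_inf : ∀ a b, sup a (inf a b) = a)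
    (inf_sup : ∀ a b, inf a (sup a b) = a) (a : A) : sup a a = a := by
  simpa only [inf_sup] using sup_inf a (sup a a)

theorem exists_absorbing_of_finite [Finite A] [Nonempty A] (sup_comm : ∀ a b, sup a b = sup b a)
    (sup_assoc : ∀ a b c, sup (sup a b) c = sup a (sup b c)) (sup_self : ∀ a, sup a a = a) :
    ∃ z, ∀ x, sup x z = z := by
  let : Max A := ⟨sup⟩
  let := SemilatticeSup.mk' sup_comm sup_assoc sup_self
  cases nonempty_fintype A
  exact ⟨Finset.univ.sup' Finset.univ_nonempty id,
    fun x => sup_eq_right.2 (Finset.le_sup' id (Finset.mem_univ x))⟩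

theorem eq_of_sup_eq_of_inf_eq (inf_sup : ∀ a b, inf a (sup a b) = a) {z x : A}
    (hsup : sup z x = x) (hinf : inf z x = x) : x = z := by
  rw [← hinf, ← hsup, inf_sup]

end LatticeOps

namespace DPBU

variable {A : Type*} (B : DPBU A)

theorem tsup_self (a : A) : B.tsup a a = a := sup_self_of_absorb B.tsup_absorb B.tinf_absorb a
theorem tinf_self (a : A) : B.tinf a a = a := sup_self_of_absorb B.tinf_absorb B.tsup_absorb a
theorem ksup_self (a : A) : B.ksup a a = a := sup_self_of_absorb B.ksup_absorb B.kinf_absorb a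
theorem kinf_self (a : A) : B.kinf a a = a := sup_self_of_absorb B.kinf_absorb B.ksup_absorb a

/-- `f, t` bound the truth order and `n, b` the knowledge order (Belnap's *neither* and
*both*). -/
structure IsBounds (f t n b : A) : Prop where
  tsup_t : ∀ x, B.tsup x t = t
  tinf_f : ∀ x, B.tinf x f = f
  kinf_n : ∀ x, B.kinf x n = n
  ksup_b : ∀ x, B.ksup x b = b

theorem exists_isBounds [Finite A] [Nonempty A] : ∃ f t n b, B.IsBounds f t n b := by
  obtain ⟨t, ht⟩ := exists_absorbing_of_finite B.tsup_comm B.tsup_assoc B.tsup_self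
  obtain ⟨f, hf⟩ := exists_absorbing_of_finite B.tinf_comm B.tinf_assoc B.tinf_self
  obtain ⟨n, hn⟩ := exists_absorbing_of_finite B.kinf_comm B.kinf_assoc B.kinf_self
  obtain ⟨b, hb⟩ := exists_absorbing_of_finite B.ksup_comm B.ksup_assoc B.ksup_self
  exact ⟨f, t, n, b, ht, hf, hn, hb⟩

namespace IsBounds

variable {B} {f t n b : A} (h : B.IsBounds f t n b)
include h

theorem t_tsup (x : A) : B.tsup t x = t := B.tsup_comm t x ▸ h.tsup_t x
theorem f_tinf (x : A) : B.tinf f x = f := B.tinf_comm f x ▸ h.tinf_f x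
theorem n_kinf (x : A) : B.kinf n x = n := B.kinf_comm n x ▸ h.kinf_n x
theorem b_ksup (x : A) : B.ksup b x = b := B.ksup_comm b x ▸ h.ksup_b x

theorem tinf_t (x : A) : B.tinf x t = x := h.tsup_t x ▸ B.tinf_absorb x t
theorem tsup_f (x : A) : B.tsup x f = x := h.tinf_f x ▸ B.tsup_absorb x f
theorem ksup_n (x : A) : B.ksup x n = x := h.kinf_n x ▸ B.ksup_absorb x n
theorem kinf_b (x : A) : B.kinf x b = x := h.ksup_b x ▸ B.kinf_absorb x b

theorem t_tinf (x : A) : B.tinf t x = x := B.tinf_comm x t ▸ h.tinf_t x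
theorem f_tsup (x : A) : B.tsup f x = x := B.tsup_comm x f ▸ h.tsup_f x
theorem n_ksup (x : A) : B.ksup n x = x := B.ksup_comm x n ▸ h.ksup_n x
theorem b_kinf (x : A) : B.kinf b x = x := B.kinf_comm x b ▸ h.kinf_b x

/- `t ≤ₖ tsup n b ≤ₖ t`, by distributing `tsup n` over `ksup t b = b` and `tsup b` over
`kinf t n = n`; the other three identities are dual. -/

theorem tsup_n_b : B.tsup n b = t :=
  eq_of_sup_eq_of_inf_eq B.kinf_absorb (by rw [← h.tsup_t n, ← B.tsup_ksup, h.ksup_b])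
    (by rw [B.tsup_comm n b, ← h.tsup_t b, ← B.tsup_kinf, h.kinf_n])

theorem tinf_n_b : B.tinf n b = f :=
  eq_of_sup_eq_of_inf_eq B.kinf_absorb (by rw [← h.tinf_f n, ← B.tinf_ksup, h.ksup_b])
    (by rw [B.tinf_comm n b, ← h.tinf_f b, ← B.tinf_kinf, h.kinf_n])

theorem ksup_f_t : B.ksup f t = b :=
  eq_of_sup_eq_of_inf_eq B.tinf_absorb (by rw [← h.ksup_b f, ← B.ksup_tsup, h.tsup_t])
    (by rw [B.ksup_comm f t, ← h.ksup_b t, ← B.ksup_tinf, h.tinf_f])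

theorem kinf_f_t : B.kinf f t = n :=
  eq_of_sup_eq_of_inf_eq B.tinf_absorb (by rw [← h.kinf_n f, ← B.kinf_tsup, h.tsup_t])
    (by rw [B.kinf_comm f t, ← h.kinf_n t, ← B.kinf_tinf, h.tinf_f])

theorem f_ne_t [Nontrivial A] : f ≠ t := by
  intro hft
  have h_eq_t (x : A) : x = t := by rw [← h.f_tsup x, hft, h.t_tsup]
  obtain ⟨x, y, hxy⟩ := exists_pair_ne A
  exact hxy ((h_eq_t x).trans (h_eq_t y).symm)

theorem n_ne_b [Nontrivial A] : n ≠ b := by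
  intro hnb
  have h_eq_b (x : A) : x = b := by rw [← h.n_ksup x, hnb, h.b_ksup]
  obtain ⟨x, y, hxy⟩ := exists_pair_ne A
  exact hxy ((h_eq_b x).trans (h_eq_b y).symm)

end IsBounds

end DPBU

def fourMap {A : Type*} (f t n b : A) : Bool × Bool → A
  | (false, false) => f
  | (true, true) => t
  | (false, true) => n
  | (true, false) => b

namespace DPBU.IsBounds

variable {A : Type*} {B : DBU A} {f t n b : A} (h : B.IsBounds f t n b)
include h

theorem neg_t : B.neg t = f := by
  rw [← h.tsup_t (B.neg f), B.neg_tsup, B.neg_neg, h.f_tinf]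

theorem neg_f : B.neg f = t := by
  rw [← h.neg_t, B.neg_neg]

theorem neg_n : B.neg n = n := by
  conv_lhs => rw [← h.kinf_n (B.neg n), B.neg_kinf, B.neg_neg, h.n_kinf]

theorem neg_b : B.neg b = b := by
  conv_lhs => rw [← h.ksup_b (B.neg b), B.neg_ksup, B.neg_neg, h.b_ksup]

theorem fourMap_injective [Nontrivial A] : Function.Injective (fourMap f t n b) := by
  have hft := h.f_ne_t
  have hnb := h.n_ne_b
  have hfn : f ≠ n := fun hfn => hft (by rw [← h.neg_f, hfn, h.neg_n])
  have hfb : f ≠ b := fun hfb => hft (by rw [← h.neg_f, hfb, h.neg_b])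
  have htn : t ≠ n := fun htn => hft (by rw [← h.neg_t, htn, h.neg_n])
  have htb : t ≠ b := fun htb => hft (by rw [← h.neg_t, htb, h.neg_b])
  rintro ⟨_ | _, _ | _⟩ ⟨_ | _, _ | _⟩ hpq <;> simp only [fourMap] at hpq <;>
    first | rfl | exact absurd hpq ‹_› | exact absurd hpq.symm ‹_›

end DPBU.IsBounds

namespace DBU

variable {A A' : Type*}

structure IsHom (B : DBU A) (C : DBU A') (φ : A → A') : Prop where
  map_tsup : ∀ a b, φ (B.tsup a b) = C.tsup (φ a) (φ b)
  map_tinf : ∀ a b, φ (B.tinf a b) = C.tinf (φ a) (φ b)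
  map_ksup : ∀ a b, φ (B.ksup a b) = C.ksup (φ a) (φ b)
  map_kinf : ∀ a b, φ (B.kinf a b) = C.kinf (φ a) (φ b)
  map_neg : ∀ a, φ (B.neg a) = C.neg (φ a)

theorem IsHom.symm {B : DBU A} {C : DBU A'} {e : A ≃ A'} (he : B.IsHom C e) :
    C.IsHom B e.symm where
  map_tsup a b := by simp [e.symm_apply_eq, he.map_tsup]
  map_tinf a b := by simp [e.symm_apply_eq, he.map_tinf]
  map_ksup a b := by simp [e.symm_apply_eq, he.map_ksup]
  map_kinf a b := by simp [e.symm_apply_eq, he.map_kinf]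
  map_neg a := by simp [e.symm_apply_eq, he.map_neg]

theorem isHom_fourMap {B : DBU A} {f t n b : A} (h : B.IsBounds f t n b) :
    fourDBU.IsHom B (fourMap f t n b) where
  map_tsup := by
    rintro ⟨_ | _, _ | _⟩ ⟨_ | _, _ | _⟩ <;>
      simp [fourDBU, fourMap, B.tsup_self, h.tsup_t, h.t_tsup, h.tsup_f, h.f_tsup, h.tsup_n_b,
        B.tsup_comm b n]
  map_tinf := by
    rintro ⟨_ | _, _ | _⟩ ⟨_ | _, _ | _⟩ <;>
      simp [fourDBU, fourMap, B.tinf_self, h.tinf_t, h.t_tinf, h.tinf_f, h.f_tinf, h.tinf_n_b,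
        B.tinf_comm b n]
  map_ksup := by
    rintro ⟨_ | _, _ | _⟩ ⟨_ | _, _ | _⟩ <;>
      simp [fourDBU, fourMap, B.ksup_self, h.ksup_b, h.b_ksup, h.ksup_n, h.n_ksup, h.ksup_f_t,
        B.ksup_comm t f]
  map_kinf := by
    rintro ⟨_ | _, _ | _⟩ ⟨_ | _, _ | _⟩ <;>
      simp [fourDBU, fourMap, B.kinf_self, h.kinf_b, h.b_kinf, h.kinf_n, h.n_kinf, h.kinf_f_t,
        B.kinf_comm t f]
  map_neg := by
    rintro ⟨_ | _, _ | _⟩ <;> simp [fourDBU, fourMap, h.neg_f, h.neg_t, h.neg_n, h.neg_b]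

end DBU

/-- Up to isomorphism, FOUR is the only four-element unbounded distributive
bilattice. -/
theorem stmt_11 {A : Type*} (B : DBU A) (hcard : Nat.card A = 4) :
    ∃ f : A ≃ Bool × Bool,
      (∀ a b, f (B.tsup a b) = fourDBU.tsup (f a) (f b)) ∧
      (∀ a b, f (B.tinf a b) = fourDBU.tinf (f a) (f b)) ∧
      (∀ a b, f (B.ksup a b) = fourDBU.ksup (f a) (f b)) ∧
      (∀ a b, f (B.kinf a b) = fourDBU.kinf (f a) (f b)) ∧
      (∀ a, f (B.neg a) = fourDBU.neg (f a)) := by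
  have : Finite A := Nat.finite_of_card_ne_zero (by omega)
  have : Nontrivial A := Finite.one_lt_card_iff_nontrivial.mp (by omega)
  obtain ⟨f, t, n, b, h⟩ := B.exists_isBounds
  have bij := h.fourMap_injective.bijective_of_nat_card_le (by simp [hcard])
  have he := DBU.IsHom.symm (e := .ofBijective _ bij) (DBU.isHom_fourMap h)
  exact ⟨_, he.map_tsup, he.map_tinf, he.map_ksup, he.map_kinf, he.map_neg⟩
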